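/- Let c₀, c₁, c₂ be integers, let P(z) = c₀z² + c₁z + c₂, and let d be a positive integer with d = d₁·d₂ where d₁, d₂ are positive integers and d₂ divides c₀. Then ∑_{0 ≤ m < d} e(P(m)/d) = (∑_{0 ≤ m₁ < d₁} e(P(m₁)/d)) · (∑_{0 ≤ m₂ < d₂} e(c₁·m₂/d₂)). -/
import Mathlib


open Finset

/-- `e(x) = exp(2πix)`. -/
noncomputable def eF (x : ℝ) : ℂ := Complex.exp (2 * Real.pi * Complex.I * x)

lemma eF_add (x y : ℝ) : eF (x + y) = eF x * eF y := by
  unfold eF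
  rw [← Complex.exp_add, Complex.ofReal_add]
  ring_nf

lemma eF_int (n : ℤ) : eF n = 1 := by
  unfold eF
  rw [show ((2 : ℂ) * Real.pi * Complex.I * ((n : ℝ) : ℂ)) = n * (2 * Real.pi * Complex.I) by
    push_cast; ring]
  exact Complex.exp_int_mul_two_pi_mul_I n

lemma key (c₀ c₁ c₂ k : ℤ) (d₁ d₂ a b : ℕ) (hd₁ : 0 < d₁) (hd₂ : 0 < d₂)
    (hk : c₀ = d₂ * k) :
    eF (((c₀ * ((a + d₁ * b : ℕ) : ℤ) ^ 2 + c₁ * ((a + d₁ * b : ℕ) : ℤ) + c₂ : ℤ) : ℝ) /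
        ((d₁ * d₂ : ℕ) : ℝ)) =
      eF (((c₀ * (a : ℤ) ^ 2 + c₁ * a + c₂ : ℤ) : ℝ) / ((d₁ * d₂ : ℕ) : ℝ)) *
        eF (((c₁ * (b : ℤ) : ℤ) : ℝ) / (d₂ : ℝ)) := by
  have hd₁' : (d₁ : ℝ) ≠ 0 := Nat.cast_ne_zero.mpr hd₁.ne'
  have hd₂' : (d₂ : ℝ) ≠ 0 := Nat.cast_ne_zero.mpr hd₂.ne'
  have h : (((c₀ * ((a + d₁ * b : ℕ) : ℤ) ^ 2 + c₁ * ((a + d₁ * b : ℕ) : ℤ) + c₂ : ℤ) : ℝ) /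
        ((d₁ * d₂ : ℕ) : ℝ)) =
      ((c₀ * (a : ℤ) ^ 2 + c₁ * a + c₂ : ℤ) : ℝ) / ((d₁ * d₂ : ℕ) : ℝ) +
        ((c₁ * (b : ℤ) : ℤ) : ℝ) / (d₂ : ℝ) +
        ((k * b * (2 * a + d₁ * b) : ℤ) : ℝ) := by
    subst hk
    push_cast
    field_simp
    ring
  rw [h, eF_add, eF_add, eF_int, mul_one]

/-- a factorization of quadratic exponential sums. -/
theorem stmt_12 (c₀ c₁ c₂ : ℤ) (d d₁ d₂ : ℕ) (hd : 0 < d) (hd₁ : 0 < d₁)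
    (hd₂ : 0 < d₂) (hdd : d = d₁ * d₂) (hdvd : (d₂ : ℤ) ∣ c₀) :
    ∑ m ∈ Finset.range d, eF (((c₀ * (m : ℤ) ^ 2 + c₁ * m + c₂ : ℤ) : ℝ) / (d : ℝ)) =
      (∑ m₁ ∈ Finset.range d₁,
          eF (((c₀ * (m₁ : ℤ) ^ 2 + c₁ * m₁ + c₂ : ℤ) : ℝ) / (d : ℝ))) *
      (∑ m₂ ∈ Finset.range d₂, eF (((c₁ * (m₂ : ℤ) : ℤ) : ℝ) / (d₂ : ℝ))) := by
  obtain ⟨k, hk⟩ := hdvd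
  subst hdd
  rw [Finset.sum_mul_sum, ← Finset.sum_product']
  refine Finset.sum_nbij' (i := fun m => (m % d₁, m / d₁))
    (j := fun p => p.1 + d₁ * p.2) ?_ ?_ ?_ ?_ ?_
  · intro m hm
    simp only [Finset.mem_range] at hm
    simp only [Finset.mem_product, Finset.mem_range]
    exact ⟨Nat.mod_lt _ hd₁, Nat.div_lt_of_lt_mul (by omega)⟩
  · intro p hp
    simp only [Finset.mem_product, Finset.mem_range] at hp
    simp only [Finset.mem_range]
    obtain ⟨h1, h2⟩ := hp
    calc p.1 + d₁ * p.2 < d₁ + d₁ * p.2 := by omega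
      _ = d₁ * (p.2 + 1) := by ring
      _ ≤ d₁ * d₂ := Nat.mul_le_mul_left _ (by omega)
  · intro m hm
    simp [Nat.mod_add_div]
  · intro p hp
    simp only [Finset.mem_product, Finset.mem_range] at hp
    simp [Nat.add_mul_div_left _ _ hd₁, Nat.mod_eq_of_lt hp.1, Nat.div_eq_of_lt hp.1]
  · intro m hm
    have := key c₀ c₁ c₂ k d₁ d₂ (m % d₁) (m / d₁) hd₁ hd₂ hk
    rw [Nat.mod_add_div] at this
    exact this
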